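/- With I = (u_1, u_2, x_1^{e_1},...,x_n^{e_n}) as above (a_i + b_i > 0, e_i > max(a_i,b_i)), define P_1 = {i+2 : a_i > b_i}, P_2 = {i+2 : a_i < b_i}, A = {i+2 : a_i > 0}, B = {i+2 : b_i > 0}, and let M be the set of edges of the Hasse diagram of 2^[n+2] consisting of: (T, T∖{1}) for 1,2 ∈ T with P_1 ⊆ T; (T, T∖{2}) for 1,2 ∈ T with P_1 ⊄ T and P_2 ⊆ T; (T, T∖{1}) for 1 ∈ T, 2 ∉ T, A ⊆ T; (T, T∖{2}) for 1 ∉ T, 2 ∈ T, B ⊆ T, T ≠ [n+2]∖{1}. Then M is a matching: no two distinct edges of M share a vertex. -/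
import Mathlib


open Finset

def v1 {n : ℕ} : Fin 2 ⊕ Fin n := Sum.inl 0
def v2 {n : ℕ} : Fin 2 ⊕ Fin n := Sum.inl 1

/-- Generators of `I`: index `inl 0 ↦ u₁` (exponents `a`), `inl 1 ↦ u₂` (exponents `b`),
`inr i ↦ x_i^{e_i}`; monomials modeled as exponent vectors. -/
def gen {n : ℕ} (a b e : Fin n → ℕ) : Fin 2 ⊕ Fin n → Fin n → ℕ :=
  Sum.elim (fun t => if t = 0 then a else b) (fun i j => if j = i then e i else 0)

/-- The lcm label `m_T` of a subset of generators (pointwise max of exponent vectors). -/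
def mT {n : ℕ} (a b e : Fin n → ℕ) (T : Finset (Fin 2 ⊕ Fin n)) : Fin n → ℕ :=
  fun i => T.sup fun k => gen a b e k i

def P0 {n : ℕ} (a b : Fin n → ℕ) : Finset (Fin 2 ⊕ Fin n) :=
  (Finset.univ.filter fun i => a i = b i).image Sum.inr

def P1 {n : ℕ} (a b : Fin n → ℕ) : Finset (Fin 2 ⊕ Fin n) :=
  (Finset.univ.filter fun i => b i < a i).image Sum.inr

def P2 {n : ℕ} (a b : Fin n → ℕ) : Finset (Fin 2 ⊕ Fin n) :=
  (Finset.univ.filter fun i => a i < b i).image Sum.inr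

def setA {n : ℕ} (a : Fin n → ℕ) : Finset (Fin 2 ⊕ Fin n) :=
  (Finset.univ.filter fun i => 0 < a i).image Sum.inr

def setB {n : ℕ} (b : Fin n → ℕ) : Finset (Fin 2 ⊕ Fin n) :=
  (Finset.univ.filter fun i => 0 < b i).image Sum.inr

/-- The matching `M` on the Hasse diagram of `2^[n+2]`: `MM a b T T'` means `(T,T')` is an
edge of the matching, given by the four families of the paper. -/
def MM {n : ℕ} (a b : Fin n → ℕ) (T T' : Finset (Fin 2 ⊕ Fin n)) : Prop :=
  (v1 ∈ T ∧ v2 ∈ T ∧ P1 a b ⊆ T ∧ T' = T.erase v1) ∨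
  (v1 ∈ T ∧ v2 ∈ T ∧ ¬ P1 a b ⊆ T ∧ P2 a b ⊆ T ∧ T' = T.erase v2) ∨
  (v1 ∈ T ∧ v2 ∉ T ∧ setA a ⊆ T ∧ T' = T.erase v1) ∨
  (v1 ∉ T ∧ v2 ∈ T ∧ setB b ⊆ T ∧ T ≠ Finset.univ.erase v1 ∧ T' = T.erase v2)

/-- `T` is an `M`-critical vertex: it is incident to no edge of the matching. -/
def critical {n : ℕ} (a b : Fin n → ℕ) (T : Finset (Fin 2 ⊕ Fin n)) : Prop :=
  ∀ T', ¬ MM a b T T' ∧ ¬ MM a b T' T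


section Helpers
variable {n : ℕ} {a b : Fin n → ℕ}

lemma mem_P1' {i : Fin n} : Sum.inr i ∈ P1 a b ↔ b i < a i := by simp [P1]
lemma mem_P2' {i : Fin n} : Sum.inr i ∈ P2 a b ↔ a i < b i := by simp [P2]
lemma mem_setA' {i : Fin n} : Sum.inr i ∈ setA a ↔ 0 < a i := by simp [setA]
lemma mem_setB' {i : Fin n} : Sum.inr i ∈ setB b ↔ 0 < b i := by simp [setB]

lemma P1_inr : ∀ x ∈ P1 a b, ∃ i : Fin n, x = Sum.inr i := by
  intro x hx; simp [P1] at hx; obtain ⟨i, _, rfl⟩ := hx; exact ⟨i, rfl⟩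
lemma P2_inr : ∀ x ∈ P2 a b, ∃ i : Fin n, x = Sum.inr i := by
  intro x hx; simp [P2] at hx; obtain ⟨i, _, rfl⟩ := hx; exact ⟨i, rfl⟩
lemma setA_inr : ∀ x ∈ setA a, ∃ i : Fin n, x = Sum.inr i := by
  intro x hx; simp [setA] at hx; obtain ⟨i, _, rfl⟩ := hx; exact ⟨i, rfl⟩
lemma setB_inr : ∀ x ∈ setB b, ∃ i : Fin n, x = Sum.inr i := by
  intro x hx; simp [setB] at hx; obtain ⟨i, _, rfl⟩ := hx; exact ⟨i, rfl⟩

lemma subset_erase_of_inr {S T : Finset (Fin 2 ⊕ Fin n)} {j : Fin 2}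
    (hS : ∀ x ∈ S, ∃ i : Fin n, x = Sum.inr i) (h : S ⊆ T) : S ⊆ T.erase (Sum.inl j) := by
  intro x hx
  obtain ⟨i, rfl⟩ := hS x hx
  exact Finset.mem_erase.2 ⟨by simp, h hx⟩

lemma all_inr_of_P1_B (hab : ∀ i, 0 < a i + b i) {T : Finset (Fin 2 ⊕ Fin n)}
    (h1 : P1 a b ⊆ T) (hB : setB b ⊆ T) : ∀ i : Fin n, Sum.inr i ∈ T := by
  intro i
  by_cases hb : 0 < b i
  · exact hB (mem_setB'.2 hb)
  · exact h1 (mem_P1'.2 (by have := hab i; omega))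

lemma all_inr_of_A_P2 (hab : ∀ i, 0 < a i + b i) {T : Finset (Fin 2 ⊕ Fin n)}
    (hA : setA a ⊆ T) (h2 : P2 a b ⊆ T) : ∀ i : Fin n, Sum.inr i ∈ T := by
  intro i
  by_cases ha : 0 < a i
  · exact hA (mem_setA'.2 ha)
  · exact h2 (mem_P2'.2 (by have := hab i; omega))

lemma all_inr_of_A_B (hab : ∀ i, 0 < a i + b i) {T : Finset (Fin 2 ⊕ Fin n)}
    (hA : setA a ⊆ T) (hB : setB b ⊆ T) : ∀ i : Fin n, Sum.inr i ∈ T := by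
  intro i
  by_cases ha : 0 < a i
  · exact hA (mem_setA'.2 ha)
  · exact hB (mem_setB'.2 (by have := hab i; omega))

lemma eq_univ_erase {T : Finset (Fin 2 ⊕ Fin n)} (h : ∀ i, Sum.inr i ∈ T)
    (h2 : v2 ∈ T) (h1 : v1 ∉ T) : T = Finset.univ.erase v1 := by
  ext x
  rcases x with j | i
  · fin_cases j
    · simpa [v1] using h1
    · simp [v1, v2, Finset.mem_erase] at h2 ⊢
      exact h2
  · simp [v1, Finset.mem_erase, h i]

lemma v1_ne_v2 : (v1 : Fin 2 ⊕ Fin n) ≠ v2 := by simp [v1, v2]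

/-- A top vertex of an edge is never a bottom vertex of an edge. -/
lemma MM_top_ne_bot (hab : ∀ i, 0 < a i + b i) {T1 T1' T2 T2' : Finset (Fin 2 ⊕ Fin n)}
    (h1 : MM a b T1 T1') (h2 : MM a b T2 T2') : T1 ≠ T2' := by
  intro he
  rcases h2 with ⟨m1, m2, hp, rfl⟩ | ⟨m1, m2, hnp, hp2, rfl⟩ | ⟨m1, m2, hA, rfl⟩ |
    ⟨m1, m2, hB, hu, rfl⟩
  · -- T1 = T2.erase v1 : v1 ∉ T1, v2 ∈ T1
    have hv1 : v1 ∉ T1 := by rw [he]; exact Finset.notMem_erase _ _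
    have hv2 : v2 ∈ T1 := by rw [he]; exact Finset.mem_erase.2 ⟨v1_ne_v2.symm, m2⟩
    rcases h1 with ⟨n1, _⟩ | ⟨n1, _⟩ | ⟨n1, _⟩ | ⟨n1, n2, nB, nu, _⟩
    · exact hv1 n1
    · exact hv1 n1
    · exact hv1 n1
    · have hP1 : P1 a b ⊆ T1 := by rw [he]; exact subset_erase_of_inr P1_inr hp
      exact nu (eq_univ_erase (all_inr_of_P1_B hab hP1 nB) hv2 hv1)
  · -- T1 = T2.erase v2 : v2 ∉ T1, v1 ∈ T1
    have hv2 : v2 ∉ T1 := by rw [he]; exact Finset.notMem_erase _ _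
    have hv1 : v1 ∈ T1 := by rw [he]; exact Finset.mem_erase.2 ⟨v1_ne_v2, m1⟩
    rcases h1 with ⟨_, n2, _⟩ | ⟨_, n2, _⟩ | ⟨n1, n2, nA, _⟩ | ⟨n1, _⟩
    · exact hv2 n2
    · exact hv2 n2
    · have hP2 : P2 a b ⊆ T1 := by rw [he]; exact subset_erase_of_inr P2_inr hp2
      refine hnp fun x hx => ?_
      obtain ⟨i, rfl⟩ := P1_inr x hx
      have hi : Sum.inr i ∈ T1 := all_inr_of_A_P2 hab nA hP2 i
      rw [he] at hi
      exact Finset.mem_of_mem_erase hi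
    · exact n1 hv1
  · -- T1 = T2.erase v1, v2 ∉ T2 : neither in T1
    have hv1 : v1 ∉ T1 := by rw [he]; exact Finset.notMem_erase _ _
    have hv2 : v2 ∉ T1 := by
      rw [he]; intro hx; exact m2 (Finset.mem_of_mem_erase hx)
    rcases h1 with ⟨n1, _⟩ | ⟨n1, _⟩ | ⟨n1, _⟩ | ⟨_, n2, _⟩
    · exact hv1 n1
    · exact hv1 n1
    · exact hv1 n1
    · exact hv2 n2
  · -- T1 = T2.erase v2, v1 ∉ T2 : neither in T1
    have hv2 : v2 ∉ T1 := by rw [he]; exact Finset.notMem_erase _ _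
    have hv1 : v1 ∉ T1 := by
      rw [he]; intro hx; exact m1 (Finset.mem_of_mem_erase hx)
    rcases h1 with ⟨n1, _⟩ | ⟨n1, _⟩ | ⟨n1, _⟩ | ⟨_, n2, _⟩
    · exact hv1 n1
    · exact hv1 n1
    · exact hv1 n1
    · exact hv2 n2

/-- Equal bottoms imply equal tops. -/
lemma MM_bot_inj (hab : ∀ i, 0 < a i + b i) {T1 T1' T2 T2' : Finset (Fin 2 ⊕ Fin n)}
    (h1 : MM a b T1 T1') (h2 : MM a b T2 T2') (he : T1' = T2') : T1 = T2 := by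
  rcases h1 with ⟨m1, m2, hp, rfl⟩ | ⟨m1, m2, hnp, hp2, rfl⟩ | ⟨m1, m2, hA, rfl⟩ |
    ⟨m1, m2, hB, hu, rfl⟩ <;>
  rcases h2 with ⟨k1, k2, kp, rfl⟩ | ⟨k1, k2, knp, kp2, rfl⟩ | ⟨k1, k2, kA, rfl⟩ |
    ⟨k1, k2, kB, ku, rfl⟩
  · rw [← Finset.insert_erase m1, he, Finset.insert_erase k1]
  · -- (1,2): v1 in T2-bottom but not in T1-bottom
    have h : v1 ∈ T1.erase v1 := by rw [he]; exact Finset.mem_erase.2 ⟨v1_ne_v2, k1⟩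
    exact absurd h (Finset.notMem_erase _ _)
  · -- (1,3): v2 in T1-bottom, not in T2-bottom
    have h : v2 ∈ T2.erase v1 := by rw [← he]; exact Finset.mem_erase.2 ⟨v1_ne_v2.symm, m2⟩
    exact absurd (Finset.mem_of_mem_erase h) k2
  · -- (1,4): v2 in T1-bottom, not in T2-bottom
    have h : v2 ∈ T2.erase v2 := by rw [← he]; exact Finset.mem_erase.2 ⟨v1_ne_v2.symm, m2⟩
    exact absurd h (Finset.notMem_erase _ _)
  · -- (2,1): v1 in T1-bottom, not in T2-bottom
    have h : v1 ∈ T2.erase v1 := by rw [← he]; exact Finset.mem_erase.2 ⟨v1_ne_v2, m1⟩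
    exact absurd h (Finset.notMem_erase _ _)
  · rw [← Finset.insert_erase m2, he, Finset.insert_erase k2]
  · -- (2,3): v1 in T1-bottom, not in T2-bottom
    have h : v1 ∈ T2.erase v1 := by rw [← he]; exact Finset.mem_erase.2 ⟨v1_ne_v2, m1⟩
    exact absurd h (Finset.notMem_erase _ _)
  · -- (2,4): v1 in T1-bottom, but v1 ∉ T2
    have h : v1 ∈ T2.erase v2 := by rw [← he]; exact Finset.mem_erase.2 ⟨v1_ne_v2, m1⟩
    exact absurd (Finset.mem_of_mem_erase h) k1
  · -- (3,1): v2 in T2-bottom, but v2 ∉ T1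
    have h : v2 ∈ T1.erase v1 := by rw [he]; exact Finset.mem_erase.2 ⟨v1_ne_v2.symm, k2⟩
    exact absurd (Finset.mem_of_mem_erase h) m2
  · -- (3,2): v1 in T2-bottom, not in T1-bottom
    have h : v1 ∈ T1.erase v1 := by rw [he]; exact Finset.mem_erase.2 ⟨v1_ne_v2, k1⟩
    exact absurd h (Finset.notMem_erase _ _)
  · rw [← Finset.insert_erase m1, he, Finset.insert_erase k1]
  · -- (3,4): the univ argument
    have hA2 : setA a ⊆ T2 := by
      intro x hx
      obtain ⟨i, rfl⟩ := setA_inr x hx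
      have h : Sum.inr i ∈ T1.erase v1 := Finset.mem_erase.2 ⟨by simp [v1], hA hx⟩
      rw [he] at h
      exact Finset.mem_of_mem_erase h
    exact absurd (eq_univ_erase (all_inr_of_A_B hab hA2 kB) k2 k1) ku
  · -- (4,1): v2 in T2-bottom, not in T1-bottom
    have h : v2 ∈ T1.erase v2 := by rw [he]; exact Finset.mem_erase.2 ⟨v1_ne_v2.symm, k2⟩
    exact absurd h (Finset.notMem_erase _ _)
  · -- (4,2): v1 in T2-bottom, but v1 ∉ T1
    have h : v1 ∈ T1.erase v2 := by rw [he]; exact Finset.mem_erase.2 ⟨v1_ne_v2, k1⟩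
    exact absurd (Finset.mem_of_mem_erase h) m1
  · -- (4,3): the univ argument, mirrored
    have hA1 : setA a ⊆ T1 := by
      intro x hx
      obtain ⟨i, rfl⟩ := setA_inr x hx
      have h : Sum.inr i ∈ T2.erase v1 := Finset.mem_erase.2 ⟨by simp [v1], kA hx⟩
      rw [← he] at h
      exact Finset.mem_of_mem_erase h
    exact absurd (eq_univ_erase (all_inr_of_A_B hab hA1 hB) m2 m1) hu
  · rw [← Finset.insert_erase m2, he, Finset.insert_erase k2]

/-- The top determines the bottom. -/
lemma MM_top_det {T T' T'' : Finset (Fin 2 ⊕ Fin n)}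
    (h1 : MM a b T T') (h2 : MM a b T T'') : T' = T'' := by
  rcases h1 with ⟨m1, m2, hp, rfl⟩ | ⟨m1, m2, hnp, hp2, rfl⟩ | ⟨m1, m2, hA, rfl⟩ |
    ⟨m1, m2, hB, hu, rfl⟩ <;>
  rcases h2 with ⟨k1, k2, kp, rfl⟩ | ⟨k1, k2, knp, kp2, rfl⟩ | ⟨k1, k2, kA, rfl⟩ |
    ⟨k1, k2, kB, ku, rfl⟩ <;>
  first
  | rfl
  | exact absurd hp knp
  | exact absurd kp hnp
  | exact absurd m1 k1
  | exact absurd k1 m1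
  | exact absurd m2 k2
  | exact absurd k2 m2

end Helpers

/-- `M` is a matching — no two distinct edges of `M` share a vertex. -/
theorem stmt7 (n : ℕ) (a b : Fin n → ℕ) (hab : ∀ i, 0 < a i + b i)
    (T1 T1' T2 T2' : Finset (Fin 2 ⊕ Fin n))
    (h1 : MM a b T1 T1') (h2 : MM a b T2 T2') (hne : (T1, T1') ≠ (T2, T2')) :
    T1 ≠ T2 ∧ T1 ≠ T2' ∧ T1' ≠ T2 ∧ T1' ≠ T2' := by
  refine ⟨?_, MM_top_ne_bot hab h1 h2, (MM_top_ne_bot hab h2 h1).symm, ?_⟩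
  · rintro rfl
    exact hne (by rw [MM_top_det h1 h2])
  · intro h
    exact hne (by rw [MM_bot_inj hab h1 h2 h, h])
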